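/- arXiv:1901.11348 — 3 statements merged into one kernel-verified Lean document; each statement's English description precedes it below -/
import Mathlib

section
/- Let X be a Banach space, U an evolution family on X, and Q : [0,∞) → L(X) a family of isomorphisms such that Q is strongly C¹-differentiable and Q⁻¹ is strongly continuous, and set W(t,s) := Q(t)⁻¹ U(t,s) Q(s). Then U is generated by a family {A(t) : t ≥ 0} with regularity spaces {Y_t : t ≥ 0} if and only if W is generated by the family A_Q := {Q(t)⁻¹A(t)Q(t) − Q(t)⁻¹Q̇(t) : t ≥ 0}, where D(Q(t)⁻¹A(t)Q(t)) = {x ∈ X : Q(t)x ∈ D(A(t))}, with regularity spaces Ỹ_t := {x ∈ X : Q(t)x ∈ Y_t}. -/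
open Set Filter MeasureTheory
open scoped ComplexInnerProductSpace

noncomputable section

namespace NBCS

/-! ### Evolution families and non-autonomous Cauchy problems -/

section NormedDefs

variable {X U Y : Type*}
variable [NormedAddCommGroup X] [NormedSpace ℂ X]
variable [NormedAddCommGroup U] [NormedSpace ℂ U]
variable [NormedAddCommGroup Y] [NormedSpace ℂ Y]

/-- An evolution family on `X`, indexed by `Δ = {(t,s) : 0 ≤ s ≤ t}`. -/
def IsEvolutionFamily (W : ℝ → ℝ → X →L[ℂ] X) : Prop :=
  (∀ t, 0 ≤ t → W t t = 1) ∧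
  (∀ s r t : ℝ, 0 ≤ s → s ≤ r → r ≤ t → W t s = (W t r).comp (W r s)) ∧
  (∀ x : X, ContinuousOn (fun p : ℝ × ℝ => W p.1 p.2 x) {p : ℝ × ℝ | 0 ≤ p.2 ∧ p.2 ≤ p.1})

/-- A backward evolution family on `X`. -/
def IsBackwardEvolutionFamily (V : ℝ → ℝ → X →L[ℂ] X) : Prop :=
  (∀ t, 0 ≤ t → V t t = 1) ∧
  (∀ s r t : ℝ, 0 ≤ s → s ≤ r → r ≤ t → V t s = (V r s).comp (V t r)) ∧
  (∀ x : X, ContinuousOn (fun p : ℝ × ℝ => V p.1 p.2 x) {p : ℝ × ℝ | 0 ≤ p.2 ∧ p.2 ≤ p.1})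

/-- A classical solution (continuous on `[s,∞)`, `C¹` on `(s,∞)`) of the inhomogeneous
non-autonomous Cauchy problem `ẋ(t) = A(t)x(t) + F(t)` on `[s,∞)`, `x(s) = xs`, where the
(in general unbounded) operator `A(t)` is encoded by a globally defined linear map together
with its domain `domA t`. -/
def IsClassicalSolution (A : ℝ → X →ₗ[ℂ] X) (domA : ℝ → Submodule ℂ X)
    (F : ℝ → X) (s : ℝ) (xs : X) (x : ℝ → X) : Prop :=
  ContinuousOn x (Ici s) ∧ x s = xs ∧ (∀ t, s ≤ t → x t ∈ domA t) ∧
  (∀ t, s < t → HasDerivAt x (A t (x t) + F t) t) ∧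
  ContinuousOn (fun t => A t (x t) + F t) (Ioi s)

/-- A classical solution which is `C¹` up to the initial time `s`. -/
def IsClassicalSolutionC1 (A : ℝ → X →ₗ[ℂ] X) (domA : ℝ → Submodule ℂ X)
    (F : ℝ → X) (s : ℝ) (xs : X) (x : ℝ → X) : Prop :=
  x s = xs ∧ (∀ t, s ≤ t → x t ∈ domA t) ∧
  (∀ t, s ≤ t → HasDerivWithinAt x (A t (x t) + F t) (Ici s) t) ∧
  ContinuousOn (fun t => A t (x t) + F t) (Ici s)

/-- The family `{A(t)}` generates the evolution family `W` with regularity spaces `Yreg`. -/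
def Generates (A : ℝ → X →ₗ[ℂ] X) (domA : ℝ → Submodule ℂ X)
    (W : ℝ → ℝ → X →L[ℂ] X) (Yreg : ℝ → Submodule ℂ X) : Prop :=
  IsEvolutionFamily W ∧
  (∀ t, 0 ≤ t → Dense (Yreg t : Set X)) ∧
  (∀ t, 0 ≤ t → Yreg t ≤ domA t) ∧
  (∀ s t : ℝ, 0 ≤ s → s ≤ t → ∀ x ∈ Yreg s, W t s x ∈ Yreg t) ∧
  (∀ s, 0 ≤ s → ∀ xs ∈ Yreg s,
    IsClassicalSolution A domA (fun _ => 0) s xs (fun t => W t s xs)) ∧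
  (∀ s, 0 ≤ s → ∀ xs ∈ Yreg s, ∀ x, IsClassicalSolution A domA (fun _ => 0) s xs x →
    ∀ t, s ≤ t → x t = W t s xs)

/-- A classical solution of the backward problem `u'(s) = -A(s)u(s)` on `[0,t]`, `u(t) = xt`. -/
def IsBackwardSolution (A : ℝ → X →ₗ[ℂ] X) (domA : ℝ → Submodule ℂ X)
    (t : ℝ) (xt : X) (u : ℝ → X) : Prop :=
  u t = xt ∧ (∀ s ∈ Icc (0:ℝ) t, u s ∈ domA s) ∧
  (∀ s ∈ Icc (0:ℝ) t, HasDerivWithinAt u (-(A s (u s))) (Icc (0:ℝ) t) s) ∧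
  ContinuousOn (fun s => A s (u s)) (Icc (0:ℝ) t)

/-- The family `{A(t)}` generates the backward evolution family `V` with
regularity spaces `Yreg`. -/
def GeneratesBackward (A : ℝ → X →ₗ[ℂ] X) (domA : ℝ → Submodule ℂ X)
    (V : ℝ → ℝ → X →L[ℂ] X) (Yreg : ℝ → Submodule ℂ X) : Prop :=
  IsBackwardEvolutionFamily V ∧
  (∀ t, 0 ≤ t → Dense (Yreg t : Set X)) ∧
  (∀ t, 0 ≤ t → Yreg t ≤ domA t) ∧
  (∀ s t : ℝ, 0 ≤ s → s ≤ t → ∀ x ∈ Yreg t, V t s x ∈ Yreg s) ∧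
  (∀ t, 0 ≤ t → ∀ xt ∈ Yreg t, IsBackwardSolution A domA t xt (fun s => V t s xt)) ∧
  (∀ t, 0 ≤ t → ∀ xt ∈ Yreg t, ∀ u, IsBackwardSolution A domA t xt u →
    ∀ s ∈ Icc (0:ℝ) t, u s = V t s xt)

/-! ### `C₀`-semigroups and Kato's classes -/

/-- `T` is a strongly continuous one-parameter semigroup on `X`. -/
def IsC0Semigroup (T : ℝ → X →L[ℂ] X) : Prop :=
  T 0 = 1 ∧ (∀ s t : ℝ, 0 ≤ s → 0 ≤ t → T (s + t) = (T s).comp (T t)) ∧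
  ∀ x : X, ContinuousOn (fun t => T t x) (Ici (0:ℝ))

/-- `A` (with domain `domA`) is the generator of the `C₀`-semigroup `T`. -/
def IsGenerator (A : X →ₗ[ℂ] X) (domA : Submodule ℂ X) (T : ℝ → X →L[ℂ] X) : Prop :=
  IsC0Semigroup T ∧
  (∀ x : X, x ∈ domA ↔
    ∃ y, Tendsto (fun h : ℝ => h⁻¹ • (T h x - x)) (nhdsWithin 0 (Ioi 0)) (nhds y)) ∧
  (∀ x ∈ domA, Tendsto (fun h : ℝ => h⁻¹ • (T h x - x)) (nhdsWithin 0 (Ioi 0)) (nhds (A x)))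

/-- `A` generates a contraction `C₀`-semigroup on `X` (with respect to the given norm). -/
def GeneratesContractionSemigroup (A : X →ₗ[ℂ] X) (domA : Submodule ℂ X) : Prop :=
  ∃ T : ℝ → X →L[ℂ] X, IsGenerator A domA T ∧ ∀ t, 0 ≤ t → ‖T t‖ ≤ 1

/-- `A` generates a `C₀`-semigroup on `X` which is contractive with respect to the
(equivalent) norm `N`. -/
def GeneratesContractionSemigroupWrt (N : X → ℝ) (A : X →ₗ[ℂ] X) (domA : Submodule ℂ X) :
    Prop :=
  ∃ T : ℝ → X →L[ℂ] X, IsGenerator A domA T ∧ ∀ t, 0 ≤ t → ∀ x : X, N (T t x) ≤ N x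

/-- `N` is a norm on `X` which is equivalent to the original norm. -/
def IsEquivNorm (N : X → ℝ) : Prop :=
  (∀ x y : X, N (x + y) ≤ N x + N y) ∧ (∀ (c : ℂ) (x : X), N (c • x) = ‖c‖ * N x) ∧
  (∀ x : X, N x = 0 ↔ x = 0) ∧
  ∃ m M : ℝ, 0 < m ∧ 0 < M ∧ ∀ x : X, m * ‖x‖ ≤ N x ∧ N x ≤ M * ‖x‖

/-- The family `{A(t)}` is Kato-stable. -/
def KatoStable (A : ℝ → X →ₗ[ℂ] X) (domA : ℝ → Submodule ℂ X) : Prop :=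
  ∃ N : ℝ → X → ℝ,
    (∀ t, 0 ≤ t → IsEquivNorm (N t)) ∧
    (∀ T : ℝ, 0 ≤ T → ∃ c : ℝ, 0 ≤ c ∧ ∀ (x : X), ∀ s ∈ Icc (0:ℝ) T, ∀ t ∈ Icc (0:ℝ) T,
      |N t x - N s x| ≤ c * |t - s| * N s x) ∧
    (∀ t, 0 ≤ t → GeneratesContractionSemigroupWrt (N t) (A t) (domA t))

/-- The family `{A(t)}` belongs to the elementary Kato class: every `A(t)` generates a
contraction `C₀`-semigroup on `X`. -/
def ElementaryKatoClass (A : ℝ → X →ₗ[ℂ] X) (domA : ℝ → Submodule ℂ X) : Prop :=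
  ∀ t, 0 ≤ t → GeneratesContractionSemigroup (A t) (domA t)

/-- The family `{A(t)}` belongs to Kato's class: it is Kato-stable, the operators have the
common domain `D` and `A(·)` is strongly `C¹`. -/
def KatoClass (A : ℝ → X →ₗ[ℂ] X) (domA : ℝ → Submodule ℂ X) (D : Submodule ℂ X) : Prop :=
  KatoStable A domA ∧ (∀ t, 0 ≤ t → domA t = D) ∧
  ∀ x ∈ D, ContDiffOn ℝ 1 (fun t => A t x) (Ici (0:ℝ))

/-! ### Boundary control and observation systems -/

/-- Compatibility of the operator `B̃ ∈ L(U,X)` with the boundary control system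
`(𝔄, D(𝔄), 𝔅)`:  `B̃u ∈ D(𝔄)`, `𝔄B̃ ∈ L(U,X)` and `𝔅B̃u = u` for all `u ∈ U`. -/
def BtCompat (Af : X →ₗ[ℂ] X) (domA : Submodule ℂ X) (Bf : X →ₗ[ℂ] U)
    (Bt : U →L[ℂ] X) : Prop :=
  (∀ v : U, Bt v ∈ domA) ∧ (∃ c : ℝ, ∀ v : U, ‖Af (Bt v)‖ ≤ c * ‖v‖) ∧
  ∀ v : U, Bf (Bt v) = v

/-- `Σ(𝔄,𝔅,𝔆)` is a boundary control and observation (BCO) system: the main operator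
`A = 𝔄|_{D(𝔄) ∩ ker 𝔅}` generates a `C₀`-semigroup, there is a compatible `B̃ ∈ L(U,X)`,
and `𝔆` is bounded with respect to the graph norm of `𝔄`. -/
def IsBCO (Af : X →ₗ[ℂ] X) (domA : Submodule ℂ X) (Bf : X →ₗ[ℂ] U) (Cf : X →ₗ[ℂ] Y) :
    Prop :=
  (∃ T : ℝ → X →L[ℂ] X, IsGenerator Af (domA ⊓ LinearMap.ker Bf) T) ∧
  (∃ Bt : U →L[ℂ] X, BtCompat Af domA Bf Bt) ∧
  (∃ c : ℝ, ∀ x ∈ domA, ‖Cf x‖ ≤ c * (‖x‖ + ‖Af x‖))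

/-- A classical solution of the autonomous boundary control problem
`ẋ(t) = 𝔄x(t)`, `𝔅x(t) = u(t)`, `x(0) = x₀`. -/
def IsClassicalSolAut (Af : X →ₗ[ℂ] X) (domA : Submodule ℂ X) (Bf : X →ₗ[ℂ] U)
    (u : ℝ → U) (x₀ : X) (x : ℝ → X) : Prop :=
  x 0 = x₀ ∧ (∀ t, (0:ℝ) ≤ t → x t ∈ domA) ∧
  (∀ t, (0:ℝ) ≤ t → HasDerivWithinAt x (Af (x t)) (Ici (0:ℝ)) t) ∧
  ContinuousOn (fun t => Af (x t)) (Ici (0:ℝ)) ∧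
  ∀ t, (0:ℝ) ≤ t → Bf (x t) = u t

/-- A classical solution pair `(x,y)` of the autonomous BCO system. -/
def IsClassicalSolPairAut (Af : X →ₗ[ℂ] X) (domA : Submodule ℂ X) (Bf : X →ₗ[ℂ] U)
    (Cf : X →ₗ[ℂ] Y) (u : ℝ → U) (x₀ : X) (x : ℝ → X) (y : ℝ → Y) : Prop :=
  IsClassicalSolAut Af domA Bf u x₀ x ∧ ContinuousOn y (Ici (0:ℝ)) ∧
  ∀ t, (0:ℝ) ≤ t → y t = Cf (x t)

/-- A classical solution of the non-autonomous boundary control problem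
`ẋ(t) = 𝔄(t)x(t)`, `𝔅(t)x(t) = u(t)`, `x(s) = xs` on `[s,∞)`. -/
def IsClassicalSolN (Af : ℝ → X →ₗ[ℂ] X) (domA : ℝ → Submodule ℂ X)
    (Bf : ℝ → X →ₗ[ℂ] U) (u : ℝ → U) (s : ℝ) (xs : X) (x : ℝ → X) : Prop :=
  x s = xs ∧ (∀ t, s ≤ t → x t ∈ domA t) ∧
  (∀ t, s ≤ t → HasDerivWithinAt x (Af t (x t)) (Ici s) t) ∧
  ContinuousOn (fun t => Af t (x t)) (Ici s) ∧
  ∀ t, s ≤ t → Bf t (x t) = u t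

/-- A classical solution pair `(x,y)` of the non-autonomous BCO system. -/
def IsClassicalSolPairN (Af : ℝ → X →ₗ[ℂ] X) (domA : ℝ → Submodule ℂ X)
    (Bf : ℝ → X →ₗ[ℂ] U) (Cf : ℝ → X →ₗ[ℂ] Y)
    (u : ℝ → U) (s : ℝ) (xs : X) (x : ℝ → X) (y : ℝ → Y) : Prop :=
  IsClassicalSolN Af domA Bf u s xs x ∧ ContinuousOn y (Ici s) ∧
  ∀ t, s ≤ t → y t = Cf t (x t)

/-- `Σ_N(𝔄,𝔅,𝔆)` is a non-autonomous boundary control and observation (NBCO) system: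
each frozen-time system is a BCO system and the family of main operators generates the
evolution family `W` with regularity spaces `Yreg`. -/
def IsNBCO (Af : ℝ → X →ₗ[ℂ] X) (domA : ℝ → Submodule ℂ X) (Bf : ℝ → X →ₗ[ℂ] U)
    (Cf : ℝ → X →ₗ[ℂ] Y) (W : ℝ → ℝ → X →L[ℂ] X) (Yreg : ℝ → Submodule ℂ X) : Prop :=
  (∀ t, 0 ≤ t → IsBCO (Af t) (domA t) (Bf t) (Cf t)) ∧
  Generates Af (fun t => domA t ⊓ LinearMap.ker (Bf t)) W Yreg

/-- Well-posedness of the non-autonomous BCO system. -/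
def WellPosedN (Af : ℝ → X →ₗ[ℂ] X) (domA : ℝ → Submodule ℂ X) (Bf : ℝ → X →ₗ[ℂ] U)
    (Cf : ℝ → X →ₗ[ℂ] Y) : Prop :=
  ∀ τ : ℝ, 0 < τ → ∃ m : ℝ, 0 < m ∧ ∀ s, 0 ≤ s → s ≤ τ →
    ∀ (u : ℝ → U) (xs : X) (x : ℝ → X) (y : ℝ → Y),
      IsClassicalSolPairN Af domA Bf Cf u s xs x y →
      ‖x τ‖ ^ 2 + ∫ r in s..τ, ‖y r‖ ^ 2 ≤ m * (‖xs‖ ^ 2 + ∫ r in s..τ, ‖u r‖ ^ 2)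

/-- `u ∈ L²_loc([0,∞); V)`. -/
def L2loc {V : Type*} [NormedAddCommGroup V] (u : ℝ → V) : Prop :=
  ∀ T : ℝ, 0 < T →
    AEStronglyMeasurable u (volume.restrict (Icc (0:ℝ) T)) ∧
    IntegrableOn (fun r => ‖u r‖ ^ 2) (Icc (0:ℝ) T)

end NormedDefs

/-! ### Hilbert space notions -/

section HilbertDefs

variable {X U Y V : Type*}
variable [NormedAddCommGroup X] [InnerProductSpace ℂ X]
variable [NormedAddCommGroup U] [InnerProductSpace ℂ U]
variable [NormedAddCommGroup Y] [InnerProductSpace ℂ Y]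
variable [NormedAddCommGroup V] [InnerProductSpace ℂ V]

/-- A family of bounded operators each of which is self-adjoint. -/
def SelfAdjointFamily (M : ℝ → V →L[ℂ] V) : Prop :=
  ∀ t, 0 ≤ t → ∀ x y : V, ⟪M t x, y⟫ = ⟪x, M t y⟫

/-- A uniformly coercive family of bounded operators. -/
def UniformlyCoercive (M : ℝ → V →L[ℂ] V) : Prop :=
  ∃ β : ℝ, 0 < β ∧ ∀ t, 0 ≤ t → ∀ x : V, β * ‖x‖ ^ 2 ≤ (⟪M t x, x⟫).re

/-- `B` (with domain `domB`) is the adjoint of the (densely defined) operator `A`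
(with domain `domA`). -/
def IsAdjointOp (A : X →ₗ[ℂ] X) (domA : Submodule ℂ X) (B : X →ₗ[ℂ] X)
    (domB : Submodule ℂ X) : Prop :=
  (∀ y ∈ domB, ∀ x ∈ domA, ⟪B y, x⟫ = ⟪y, A x⟫) ∧
  (∀ y z : X, (∀ x ∈ domA, ⟪z, x⟫ = ⟪y, A x⟫) → y ∈ domB ∧ z = B y)

/-- The autonomous BCO system `Σ(𝔄,𝔅,𝔆)` is `(P,R,J)`-scattering passive. -/
def ScatteringPassive (Af : X →ₗ[ℂ] X) (domA : Submodule ℂ X) (Bf : X →ₗ[ℂ] U)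
    (Cf : X →ₗ[ℂ] Y) (P : X →L[ℂ] X) (R : U →L[ℂ] U) (J : Y →L[ℂ] Y) : Prop :=
  ∀ (u : ℝ → U) (x₀ : X) (x : ℝ → X) (y : ℝ → Y),
    IsClassicalSolPairAut Af domA Bf Cf u x₀ x y →
    ∀ t, (0:ℝ) ≤ t → ∀ d : ℝ,
      HasDerivWithinAt (fun τ => (⟪P (x τ), x τ⟫).re) d (Ici (0:ℝ)) t →
      d ≤ (⟪R (u t), u t⟫).re - (⟪y t, J (y t)⟫).re

/-- The autonomous BCO system `Σ(𝔄,𝔅,𝔆)` is `(P,R,J)`-scattering energy preserving. -/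
def ScatteringEnergyPreserving (Af : X →ₗ[ℂ] X) (domA : Submodule ℂ X) (Bf : X →ₗ[ℂ] U)
    (Cf : X →ₗ[ℂ] Y) (P : X →L[ℂ] X) (R : U →L[ℂ] U) (J : Y →L[ℂ] Y) : Prop :=
  ∀ (u : ℝ → U) (x₀ : X) (x : ℝ → X) (y : ℝ → Y),
    IsClassicalSolPairAut Af domA Bf Cf u x₀ x y →
    ∀ t, (0:ℝ) ≤ t → ∀ d : ℝ,
      HasDerivWithinAt (fun τ => (⟪P (x τ), x τ⟫).re) d (Ici (0:ℝ)) t →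
      d = (⟪R (u t), u t⟫).re - (⟪y t, J (y t)⟫).re

/-- The non-autonomous BCO system `Σ_N(𝔄,𝔅,𝔆)` is `(R,P,J)`-scattering passive;
here `P'` is the strong derivative of `P`. -/
def NScatteringPassive (Af : ℝ → X →ₗ[ℂ] X) (domA : ℝ → Submodule ℂ X)
    (Bf : ℝ → X →ₗ[ℂ] U) (Cf : ℝ → X →ₗ[ℂ] Y)
    (R : ℝ → U →L[ℂ] U) (P P' : ℝ → X →L[ℂ] X) (J : ℝ → Y →L[ℂ] Y) : Prop :=
  ∀ s, (0:ℝ) ≤ s → ∀ (u : ℝ → U) (xs : X) (x : ℝ → X) (y : ℝ → Y),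
    IsClassicalSolPairN Af domA Bf Cf u s xs x y →
    ∀ t, s ≤ t → ∀ d : ℝ,
      HasDerivWithinAt (fun τ => (⟪P τ (x τ), x τ⟫).re) d (Ici s) t →
      d + (⟪y t, J t (y t)⟫).re ≤ (⟪u t, R t (u t)⟫).re + (⟪P' t (x t), x t⟫).re

/-- The pointwise characterization of `(R,P,J)`-scattering passivity of the non-autonomous
BCO system on the admissible spaces `𝒱(t)`. -/
def NScatteringPassivePointwise (Af : ℝ → X →ₗ[ℂ] X) (domA : ℝ → Submodule ℂ X)
    (Bf : ℝ → X →ₗ[ℂ] U) (Cf : ℝ → X →ₗ[ℂ] Y)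
    (R : ℝ → U →L[ℂ] U) (P : ℝ → X →L[ℂ] X) (J : ℝ → Y →L[ℂ] Y) : Prop :=
  ∀ t, (0:ℝ) ≤ t → ∀ (x : X) (u : U), x ∈ domA t → Bf t x = u →
    2 * (⟪Af t x, P t x⟫).re ≤ (⟪R t u, Bf t x⟫).re - (⟪Cf t x, J t (Cf t x)⟫).re

end HilbertDefs

end NBCS

/-
If `u` solves `u' = A(t)u`, then `w(t) = Q(t)⁻¹u(t)` satisfies, by the product rule,
`w' = Q⁻¹(u' - Q̇Q⁻¹u) = (Q⁻¹AQ - Q⁻¹Q̇)w`, and `W(t,s) = Q(t)⁻¹U(t,s)Q(s)` carries the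
regularity spaces `Ỹ_s` into `Ỹ_t`; so every property of "`A` generates `U`" transfers
to "`A_Q` generates `W`". Only strong continuity is available, but by Banach–Steinhaus a
strongly continuous family of operators is locally uniformly bounded, which is what makes
the product rule and the joint continuity go through. The converse is the same argument
for `Q⁻¹`, which is again strongly `C¹`, with derivative `-Q⁻¹Q̇Q⁻¹`, and for which
`(A_Q)_{Q⁻¹} = A`.
-/

open Topology

section StrongContinuity

variable {𝕜 E F : Type*} [NontriviallyNormedField 𝕜]
  [NormedAddCommGroup E] [NormedSpace 𝕜 E] [NormedAddCommGroup F] [NormedSpace 𝕜 F]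

theorem Filter.Tendsto.clm_apply_of_eventually_norm_le {α : Type*} {l : Filter α}
    {R : α → E →L[𝕜] F} {R₀ : E →L[𝕜] F} {C : ℝ} (hC : ∀ᶠ i in l, ‖R i‖ ≤ C)
    (hR : ∀ x, Tendsto (fun i => R i x) l (𝓝 (R₀ x))) {f : α → E} {x₀ : E}
    (hf : Tendsto f l (𝓝 x₀)) : Tendsto (fun i => R i (f i)) l (𝓝 (R₀ x₀)) := by
  rw [tendsto_iff_norm_sub_tendsto_zero]
  have hbound : Tendsto (fun i => C * ‖f i - x₀‖ + ‖R i x₀ - R₀ x₀‖) l (𝓝 0) := by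
    simpa using (tendsto_const_nhds.mul (tendsto_iff_norm_sub_tendsto_zero.mp hf)).add
      (tendsto_iff_norm_sub_tendsto_zero.mp (hR x₀))
  refine squeeze_zero' (.of_forall fun i => norm_nonneg _) (hC.mono fun i hCi => ?_) hbound
  calc ‖R i (f i) - R₀ x₀‖ ≤ ‖R i (f i - x₀)‖ + ‖R i x₀ - R₀ x₀‖ := by
        rw [map_sub]; exact norm_sub_le_norm_sub_add_norm_sub _ _ _
    _ ≤ C * ‖f i - x₀‖ + ‖R i x₀ - R₀ x₀‖ := by
        gcongr; exact (R i).le_of_opNorm_le hCi _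

variable [CompleteSpace E] {ι : Type*} [TopologicalSpace ι] {R : ι → E →L[𝕜] F}

theorem IsCompact.exists_bound_of_continuousOn_apply {K : Set ι} (hK : IsCompact K)
    (hR : ∀ x, ContinuousOn (fun i => R i x) K) : ∃ C, ∀ i ∈ K, ‖R i‖ ≤ C := by
  obtain ⟨C, hC⟩ := banach_steinhaus (g := fun i : K => R i) fun x =>
    let ⟨C, hC⟩ := hK.exists_bound_of_continuousOn (hR x)
    ⟨C, fun i => hC i i.2⟩
  exact ⟨C, fun i hi => hC ⟨i, hi⟩⟩

theorem IsClosed.eventually_norm_le_of_continuousOn_apply [WeaklyLocallyCompactSpace ι]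
    {S : Set ι} (hS : IsClosed S) (hR : ∀ x, ContinuousOn (fun i => R i x) S) (i₀ : ι) :
    ∃ C, ∀ᶠ i in 𝓝[S] i₀, ‖R i‖ ≤ C := by
  obtain ⟨K, hK, hK₀⟩ := exists_compact_mem_nhds i₀
  obtain ⟨C, hC⟩ := (hK.inter_left hS).exists_bound_of_continuousOn_apply
    fun x => (hR x).mono inter_subset_left
  exact ⟨C, Filter.mem_of_superset (inter_mem_nhdsWithin S hK₀) hC⟩

theorem ContinuousOn.clm_apply_of_continuousOn_apply [WeaklyLocallyCompactSpace ι]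
    {S T : Set ι} {f : ι → E} (hf : ContinuousOn f T) (hS : IsClosed S)
    (hR : ∀ x, ContinuousOn (fun i => R i x) S) (hTS : T ⊆ S) :
    ContinuousOn (fun i => R i (f i)) T := fun i hi =>
  let ⟨_, hC⟩ := hS.eventually_norm_le_of_continuousOn_apply hR i
  (hf i hi).clm_apply_of_eventually_norm_le (nhdsWithin_mono i hTS hC)
    fun x => (hR x i (hTS hi)).mono hTS

end StrongContinuity

section ProductRule

variable {𝕜 E F : Type*} [NontriviallyNormedField 𝕜] [NormedAlgebra ℝ 𝕜]
  [NormedAddCommGroup E] [NormedSpace 𝕜 E] [NormedSpace ℝ E] [IsScalarTower ℝ 𝕜 E]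
  [NormedAddCommGroup F] [NormedSpace 𝕜 F] [NormedSpace ℝ F] [IsScalarTower ℝ 𝕜 F]

theorem HasDerivWithinAt.continuousLinearEquiv_symm_apply {Q : ℝ → E ≃L[𝕜] F} {u : ℝ → F}
    {u' q' : F} {s : Set ℝ} {t C : ℝ} (hu : HasDerivWithinAt u u' s t)
    (hC : ∀ᶠ τ in 𝓝[s] t, ‖((Q τ).symm : F →L[𝕜] E)‖ ≤ C)
    (hQsymm : ∀ y, ContinuousWithinAt (fun τ => (Q τ).symm y) s t)
    (hQ : HasDerivWithinAt (fun τ => Q τ ((Q t).symm (u t))) q' s t) :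
    HasDerivWithinAt (fun τ => (Q τ).symm (u τ)) ((Q t).symm (u' - q')) s t := by
  set z := (Q t).symm (u t) with hz
  -- `Q(τ)⁻¹u(τ) - Q(t)⁻¹u(t) = Q(τ)⁻¹((u(τ) - u(t)) - (Q(τ)z - Q(t)z))`
  have hslope : ∀ τ, ((Q τ).symm : F →L[𝕜] E) (slope u t τ - slope (fun σ => Q σ z) t τ) =
      slope (fun σ => (Q σ).symm (u σ)) t τ := by
    intro τ
    simp only [slope, vsub_eq_sub, ← smul_sub, ContinuousLinearMap.map_smul_of_tower, map_sub,
      ContinuousLinearEquiv.coe_coe, ContinuousLinearEquiv.symm_apply_apply, hz,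
      ContinuousLinearEquiv.apply_symm_apply]
    congr 1
    abel
  rw [hasDerivWithinAt_iff_tendsto_slope] at hQ hu ⊢
  have hle : 𝓝[s \ {t}] t ≤ 𝓝[s] t := nhdsWithin_mono _ sdiff_subset
  exact ((hu.sub hQ).clm_apply_of_eventually_norm_le (R₀ := ((Q t).symm : F →L[𝕜] E)) (hle hC)
    fun y => (hQsymm y).mono_left hle).congr hslope

end ProductRule

namespace NBCS

variable {X : Type*} [NormedAddCommGroup X] [NormedSpace ℂ X]

structure IsStrongC1Iso (Q : ℝ → X ≃L[ℂ] X) (Q' : ℝ → X →L[ℂ] X) : Prop where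
  hasDerivWithinAt : ∀ x : X, ∀ t ∈ Ici (0:ℝ),
    HasDerivWithinAt (fun τ => (Q τ : X →L[ℂ] X) x) (Q' t x) (Ici (0:ℝ)) t
  continuousOn_deriv : ∀ x : X, ContinuousOn (fun t => Q' t x) (Ici (0:ℝ))
  continuousOn_symm : ∀ x : X, ContinuousOn (fun t => ((Q t).symm : X →L[ℂ] X) x) (Ici (0:ℝ))

def symmDeriv (Q : ℝ → X ≃L[ℂ] X) (Q' : ℝ → X →L[ℂ] X) (t : ℝ) : X →L[ℂ] X :=
  -(((Q t).symm : X →L[ℂ] X) ∘L Q' t ∘L ((Q t).symm : X →L[ℂ] X))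

def similarGenerator (Q : ℝ → X ≃L[ℂ] X) (Q' : ℝ → X →L[ℂ] X) (A : ℝ → X →ₗ[ℂ] X)
    (t : ℝ) : X →ₗ[ℂ] X :=
  ((Q t).symm : X →L[ℂ] X) ∘ₗ A t ∘ₗ (Q t : X →L[ℂ] X) -
    ((Q t).symm : X →L[ℂ] X) ∘ₗ (Q' t : X →ₗ[ℂ] X)

def similarSubspaces (Q : ℝ → X ≃L[ℂ] X) (Y : ℝ → Submodule ℂ X) (t : ℝ) : Submodule ℂ X :=
  (Y t).comap ((Q t : X →L[ℂ] X) : X →ₗ[ℂ] X)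

def similarEvolution (Q : ℝ → X ≃L[ℂ] X) (U : ℝ → ℝ → X →L[ℂ] X) (t s : ℝ) : X →L[ℂ] X :=
  (((Q t).symm : X →L[ℂ] X) ∘L U t s) ∘L (Q s : X →L[ℂ] X)

variable {Q : ℝ → X ≃L[ℂ] X} {Q' : ℝ → X →L[ℂ] X}

@[simp]
theorem symmDeriv_apply (t : ℝ) (x : X) :
    symmDeriv Q Q' t x = -(Q t).symm (Q' t ((Q t).symm x)) :=
  rfl

@[simp]
theorem similarGenerator_apply (A : ℝ → X →ₗ[ℂ] X) (t : ℝ) (x : X) :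
    similarGenerator Q Q' A t x = (Q t).symm (A t (Q t x) - Q' t x) := by
  simp [similarGenerator]

@[simp]
theorem mem_similarSubspaces (Y : ℝ → Submodule ℂ X) (t : ℝ) (x : X) :
    x ∈ similarSubspaces Q Y t ↔ Q t x ∈ Y t :=
  Iff.rfl

@[simp]
theorem similarEvolution_apply (U : ℝ → ℝ → X →L[ℂ] X) (t s : ℝ) (x : X) :
    similarEvolution Q U t s x = (Q t).symm (U t s (Q s x)) :=
  rfl

theorem similarGenerator_symm (A : ℝ → X →ₗ[ℂ] X) :
    similarGenerator (fun t => (Q t).symm) (symmDeriv Q Q') (similarGenerator Q Q' A) = A := by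
  ext t x
  simp

theorem similarSubspaces_symm (Y : ℝ → Submodule ℂ X) :
    similarSubspaces (fun t => (Q t).symm) (similarSubspaces Q Y) = Y := by
  ext t x
  simp

theorem similarEvolution_symm (U : ℝ → ℝ → X →L[ℂ] X) :
    similarEvolution (fun t => (Q t).symm) (similarEvolution Q U) = U := by
  ext t s x
  simp

namespace IsStrongC1Iso

theorem continuousOn_apply (hQ : IsStrongC1Iso Q Q') (x : X) :
    ContinuousOn (fun t => (Q t : X →L[ℂ] X) x) (Ici 0) :=
  fun t ht => (hQ.hasDerivWithinAt x t ht).continuousWithinAt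

variable [CompleteSpace X]

theorem continuousOn_symm_apply (hQ : IsStrongC1Iso Q Q') {T : Set ℝ} (hT : T ⊆ Ici 0)
    {f : ℝ → X} (hf : ContinuousOn f T) : ContinuousOn (fun t => (Q t).symm (f t)) T :=
  hf.clm_apply_of_continuousOn_apply isClosed_Ici hQ.continuousOn_symm hT

theorem continuousOn_deriv_apply (hQ : IsStrongC1Iso Q Q') {T : Set ℝ} (hT : T ⊆ Ici 0)
    {f : ℝ → X} (hf : ContinuousOn f T) : ContinuousOn (fun t => Q' t (f t)) T :=
  hf.clm_apply_of_continuousOn_apply isClosed_Ici hQ.continuousOn_deriv hT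

theorem hasDerivWithinAt_symm_apply (hQ : IsStrongC1Iso Q Q') {u : ℝ → X} {u' : X}
    {s : Set ℝ} {t : ℝ} (ht : 0 ≤ t) (hs : Ici 0 ∈ 𝓝[s] t) (hu : HasDerivWithinAt u u' s t) :
    HasDerivWithinAt (fun τ => (Q τ).symm (u τ)) ((Q t).symm (u' - Q' t ((Q t).symm (u t))))
      s t := by
  obtain ⟨C, hC⟩ := isClosed_Ici.eventually_norm_le_of_continuousOn_apply hQ.continuousOn_symm t
  exact hu.continuousLinearEquiv_symm_apply (nhdsWithin_le_of_mem hs hC)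
    (fun y => (hQ.continuousOn_symm y t ht).mono_of_mem_nhdsWithin hs)
    ((hQ.hasDerivWithinAt _ t ht).mono_of_mem_nhdsWithin hs)

theorem symm (hQ : IsStrongC1Iso Q Q') :
    IsStrongC1Iso (fun t => (Q t).symm) (symmDeriv Q Q') where
  hasDerivWithinAt x t ht := by
    simpa using hQ.hasDerivWithinAt_symm_apply ht self_mem_nhdsWithin
      (hasDerivWithinAt_const t (Ici 0) x)
  continuousOn_deriv x := (hQ.continuousOn_symm_apply subset_rfl
    (hQ.continuousOn_deriv_apply subset_rfl (hQ.continuousOn_symm x))).neg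
  continuousOn_symm x := by
    simpa using hQ.continuousOn_apply x

end IsStrongC1Iso

theorem IsClassicalSolution.similar [CompleteSpace X] (hQ : IsStrongC1Iso Q Q')
    {A : ℝ → X →ₗ[ℂ] X} {domA : ℝ → Submodule ℂ X} {F : ℝ → X} {s : ℝ} {xs : X} {u : ℝ → X}
    (hs : 0 ≤ s) (hu : IsClassicalSolution A domA F s xs u) :
    IsClassicalSolution (similarGenerator Q Q' A) (similarSubspaces Q domA)
      (fun t => (Q t).symm (F t)) s ((Q s).symm xs) (fun t => (Q t).symm (u t)) := by
  obtain ⟨hcont, hinit, hdom, hderiv, hAcont⟩ := hu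
  have hIci : Ici s ⊆ Ici 0 := Ici_subset_Ici.mpr hs
  have hIoi : Ioi s ⊆ Ici 0 := Ioi_subset_Ici_self.trans hIci
  have hwcont := hQ.continuousOn_symm_apply hIci hcont
  refine ⟨hwcont, congrArg (Q s).symm hinit, fun t ht => by simpa using hdom t ht,
    fun t ht => ?_, ?_⟩
  · have ht₀ : 0 < t := hs.trans_lt ht
    have hw := hQ.hasDerivWithinAt_symm_apply ht₀.le
      (by rw [nhdsWithin_univ]; exact Ici_mem_nhds ht₀) (hderiv t ht).hasDerivWithinAt
    rw [hasDerivWithinAt_univ] at hw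
    convert hw using 1
    simp only [similarGenerator_apply, ContinuousLinearEquiv.apply_symm_apply, map_sub, map_add]
    abel
  · refine (hQ.continuousOn_symm_apply hIoi
      (hAcont.sub (hQ.continuousOn_deriv_apply hIoi (hwcont.mono Ioi_subset_Ici_self)))).congr
      fun t _ => ?_
    simp only [similarGenerator_apply, ContinuousLinearEquiv.apply_symm_apply, Pi.sub_apply,
      map_sub, map_add]
    abel

theorem IsEvolutionFamily.similar [CompleteSpace X] {U : ℝ → ℝ → X →L[ℂ] X}
    (hU : IsEvolutionFamily U) (hQ : ∀ x, ContinuousOn (fun t => (Q t : X →L[ℂ] X) x) (Ici 0))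
    (hQsymm : ∀ x, ContinuousOn (fun t => ((Q t).symm : X →L[ℂ] X) x) (Ici 0)) :
    IsEvolutionFamily (similarEvolution Q U) := by
  obtain ⟨hId, hComp, hCont⟩ := hU
  refine ⟨fun t ht => ?_, fun s r t hs hsr hrt => ?_, fun x => ?_⟩
  · ext x
    simp [hId t ht]
  · ext x
    simp [hComp s r t hs hsr hrt]
  · have hΔ : IsClosed {p : ℝ × ℝ | 0 ≤ p.2 ∧ p.2 ≤ p.1} :=
      (isClosed_le continuous_const continuous_snd).inter
        (isClosed_le continuous_snd continuous_fst)
    have hQx : ContinuousOn (fun p : ℝ × ℝ => (Q p.2 : X →L[ℂ] X) x)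
        {p : ℝ × ℝ | 0 ≤ p.2 ∧ p.2 ≤ p.1} :=
      (hQ x).comp continuous_snd.continuousOn fun p hp => hp.1
    have hUQx := hQx.clm_apply_of_continuousOn_apply hΔ hCont subset_rfl
    simpa using hUQx.clm_apply_of_continuousOn_apply (isClosed_Ici.preimage continuous_fst)
      (fun y => (hQsymm y).comp continuous_fst.continuousOn fun _ => id)
      fun p hp => hp.1.trans hp.2

variable [CompleteSpace X] {A : ℝ → X →ₗ[ℂ] X} {domA Y : ℝ → Submodule ℂ X}
  {U : ℝ → ℝ → X →L[ℂ] X}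

theorem Generates.similar (hQ : IsStrongC1Iso Q Q') (h : Generates A domA U Y) :
    Generates (similarGenerator Q Q' A) (similarSubspaces Q domA) (similarEvolution Q U)
      (similarSubspaces Q Y) := by
  obtain ⟨hU, hDense, hYdom, hInv, hExist, hUniq⟩ := h
  refine ⟨hU.similar hQ.continuousOn_apply hQ.continuousOn_symm,
    fun t ht => (hDense t ht).preimage (Q t).toHomeomorph.isOpenMap,
    fun t ht => Submodule.comap_mono (hYdom t ht),
    fun s t hs hst x hx => by simpa using hInv s t hs hst _ hx,
    fun s hs xs hxs => by simpa using (hExist s hs _ hxs).similar hQ hs,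
    fun s hs xs hxs w hw t hst => ?_⟩
  have hQw := hw.similar hQ.symm hs
  rw [similarGenerator_symm, similarSubspaces_symm] at hQw
  exact (Q t).eq_symm_apply.mpr (hUniq s hs _ hxs _ (by simpa using hQw) t hst)

theorem Generates.of_similar (hQ : IsStrongC1Iso Q Q')
    (h : Generates (similarGenerator Q Q' A) (similarSubspaces Q domA) (similarEvolution Q U)
      (similarSubspaces Q Y)) :
    Generates A domA U Y := by
  simpa only [similarGenerator_symm, similarSubspaces_symm, similarEvolution_symm] using
    h.similar hQ.symm

end NBCS

theorem similar_evolution_family_generator_general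
    {X : Type*} [NormedAddCommGroup X] [NormedSpace ℂ X] [CompleteSpace X]
    (Uev : ℝ → ℝ → X →L[ℂ] X)
    (Q : ℝ → X ≃L[ℂ] X) (Q' : ℝ → X →L[ℂ] X)
    (hQdiff : ∀ x : X, ∀ t ∈ Set.Ici (0:ℝ),
      HasDerivWithinAt (fun τ => (Q τ : X →L[ℂ] X) x) (Q' t x) (Set.Ici (0:ℝ)) t)
    (hQ'cont : ∀ x : X, ContinuousOn (fun t => Q' t x) (Set.Ici (0:ℝ)))
    (hQinv : ∀ x : X, ContinuousOn (fun t => ((Q t).symm : X →L[ℂ] X) x) (Set.Ici (0:ℝ)))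
    (A : ℝ → X →ₗ[ℂ] X) (domA : ℝ → Submodule ℂ X) (Yreg : ℝ → Submodule ℂ X) :
    NBCS.Generates A domA Uev Yreg ↔
      NBCS.Generates
        (fun t => (((Q t).symm : X →L[ℂ] X) : X →ₗ[ℂ] X) ∘ₗ
                    (A t ∘ₗ (((Q t : X →L[ℂ] X)) : X →ₗ[ℂ] X)) -
                  (((Q t).symm : X →L[ℂ] X) : X →ₗ[ℂ] X) ∘ₗ ((Q' t : X →ₗ[ℂ] X)))
        (fun t => (domA t).comap (((Q t : X →L[ℂ] X)) : X →ₗ[ℂ] X))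
        (fun t s => (((Q t).symm : X →L[ℂ] X).comp (Uev t s)).comp (Q s : X →L[ℂ] X))
        (fun t => (Yreg t).comap (((Q t : X →L[ℂ] X)) : X →ₗ[ℂ] X)) :=
  have hQ : NBCS.IsStrongC1Iso Q Q' := ⟨hQdiff, hQ'cont, hQinv⟩
  ⟨fun h => h.similar hQ, fun h => h.of_similar hQ⟩

/-- With `Q` strongly `C¹` (strong derivative `Q'`) and `Q⁻¹` strongly
continuous, and `W(t,s) = Q(t)⁻¹U(t,s)Q(s)`:  `U` is generated by `{A(t)}` with regularity
spaces `{Y_t}` iff `W` is generated by `A_Q = {Q(t)⁻¹A(t)Q(t) − Q(t)⁻¹Q̇(t)}` (with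
`D(Q(t)⁻¹A(t)Q(t)) = {x : Q(t)x ∈ D(A(t))}`) with regularity spaces
`Ỹ_t = {x : Q(t)x ∈ Y_t}`. -/
theorem similar_evolution_family_generator
    {X : Type*} [NormedAddCommGroup X] [NormedSpace ℂ X] [CompleteSpace X]
    (Uev : ℝ → ℝ → X →L[ℂ] X) (hU : NBCS.IsEvolutionFamily Uev)
    (Q : ℝ → X ≃L[ℂ] X) (Q' : ℝ → X →L[ℂ] X)
    (hQdiff : ∀ x : X, ∀ t ∈ Set.Ici (0:ℝ),
      HasDerivWithinAt (fun τ => (Q τ : X →L[ℂ] X) x) (Q' t x) (Set.Ici (0:ℝ)) t)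
    (hQ'cont : ∀ x : X, ContinuousOn (fun t => Q' t x) (Set.Ici (0:ℝ)))
    (hQinv : ∀ x : X, ContinuousOn (fun t => ((Q t).symm : X →L[ℂ] X) x) (Set.Ici (0:ℝ)))
    (A : ℝ → X →ₗ[ℂ] X) (domA : ℝ → Submodule ℂ X) (Yreg : ℝ → Submodule ℂ X) :
    NBCS.Generates A domA Uev Yreg ↔
      NBCS.Generates
        (fun t => (((Q t).symm : X →L[ℂ] X) : X →ₗ[ℂ] X) ∘ₗ
                    (A t ∘ₗ (((Q t : X →L[ℂ] X)) : X →ₗ[ℂ] X)) -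
                  (((Q t).symm : X →L[ℂ] X) : X →ₗ[ℂ] X) ∘ₗ ((Q' t : X →ₗ[ℂ] X)))
        (fun t => (domA t).comap (((Q t : X →L[ℂ] X)) : X →ₗ[ℂ] X))
        (fun t s => (((Q t).symm : X →L[ℂ] X).comp (Uev t s)).comp (Q s : X →L[ℂ] X))
        (fun t => (Yreg t).comap (((Q t : X →L[ℂ] X)) : X →ₗ[ℂ] X)) :=
  similar_evolution_family_generator_general Uev Q Q' hQdiff hQ'cont hQinv A domA Yreg
end
end

section
/- Let X be a Hilbert space. Assume that {A(t) : t ≥ 0} generates an evolution family U = {U(t,s) : (t,s) ∈ Δ} with regularity spaces {Y_t}, and that the adjoint operators {A(t)* : t ≥ 0} generate a backward evolution family U_* = {U_*(t,s) : (t,s) ∈ Δ} with regularity spaces {Y_{t,*}}. Then U(t,s) = (U_*(t,s))* for all (t,s) ∈ Δ. -/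
open Set Filter MeasureTheory
open scoped ComplexInnerProductSpace

noncomputable section

/-! The pairing `r ↦ ⟪U_*(t,r) y, U(r,s) x⟫` has derivative
`⟪U_*(t,r) y, A(r) U(r,s) x⟫ - ⟪A(r)* U_*(t,r) y, U(r,s) x⟫ = 0`, so it is constant on `[s,t]`;
comparing its values at `r = s` and `r = t` gives `⟪U_*(t,s) y, x⟫ = ⟪y, U(t,s) x⟫` on the
regularity spaces, and density of those spaces finishes the proof. -/

theorem eq_of_hasDerivAt_zero {E : Type*} [NormedAddCommGroup E] [NormedSpace ℝ E]
    [CompleteSpace E] {φ : ℝ → E} {a b : ℝ} (hab : a ≤ b) (hcont : ContinuousOn φ (Icc a b))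
    (hderiv : ∀ x ∈ Ioo a b, HasDerivAt φ 0 x) : φ a = φ b := by
  have h := intervalIntegral.integral_eq_sub_of_hasDerivAt_of_le hab hcont hderiv
    intervalIntegrable_const
  rw [intervalIntegral.integral_zero, eq_comm, sub_eq_zero] at h
  exact h.symm

theorem ContinuousLinearMap.eq_adjoint_of_inner_eq_on_dense {E F : Type*}
    [NormedAddCommGroup E] [InnerProductSpace ℂ E] [CompleteSpace E]
    [NormedAddCommGroup F] [InnerProductSpace ℂ F] [CompleteSpace F]
    {S : F →L[ℂ] E} {T : E →L[ℂ] F} {D : Set E} {D' : Set F} (hD : Dense D) (hD' : Dense D')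
    (h : ∀ x ∈ D, ∀ y ∈ D', ⟪S y, x⟫ = ⟪y, T x⟫) : T = ContinuousLinearMap.adjoint S := by
  have hpair : (fun p : E × F => ⟪S p.2, p.1⟫) = fun p => ⟪p.2, T p.1⟫ :=
    Continuous.ext_on (hD.prod hD') (by fun_prop) (by fun_prop) fun p hp => h p.1 hp.1 p.2 hp.2
  rw [ContinuousLinearMap.eq_adjoint_iff]
  intro x y
  rw [← inner_conj_symm, ← congrFun hpair (x, y), inner_conj_symm]

namespace NBCS

variable {X : Type*} [NormedAddCommGroup X] [InnerProductSpace ℂ X]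

theorem IsBackwardSolution.inner_eq_of_isClassicalSolution
    {A Astar : ℝ → X →ₗ[ℂ] X} {domA domAstar : ℝ → Submodule ℂ X} {s t : ℝ} {x y : X}
    {f g : ℝ → X} (hs : 0 ≤ s) (hst : s ≤ t)
    (hadj : ∀ r ∈ Ioo s t, ∀ u ∈ domAstar r, ∀ v ∈ domA r, ⟪Astar r u, v⟫ = ⟪u, A r v⟫)
    (hg : IsBackwardSolution Astar domAstar t y g)
    (hf : IsClassicalSolution A domA (fun _ => 0) s x f) : ⟪g s, x⟫ = ⟪y, f t⟫ := by
  obtain ⟨hfcont, hf₀, hfmem, hfderiv, -⟩ := hf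
  obtain ⟨hg₀, hgmem, hgderiv, -⟩ := hg
  have hsub : Icc s t ⊆ Icc 0 t := Icc_subset_Icc_left hs
  have hgcont : ContinuousOn g (Icc 0 t) := fun r hr => (hgderiv r hr).continuousWithinAt
  have hcont : ContinuousOn (fun r => ⟪g r, f r⟫) (Icc s t) :=
    (hgcont.mono hsub).inner (hfcont.mono Icc_subset_Ici_self)
  have hderiv : ∀ r ∈ Ioo s t, HasDerivAt (fun r => ⟪g r, f r⟫) 0 r := by
    intro r hr
    have hr₀ : r ∈ Icc 0 t := hsub (Ioo_subset_Icc_self hr)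
    have hdg := (hgderiv r hr₀).hasDerivAt (Icc_mem_nhds (hs.trans_lt hr.1) hr.2)
    have hd := hdg.inner ℂ (hfderiv r hr.1)
    rwa [add_zero, inner_neg_left, hadj r hr _ (hgmem r hr₀) _ (hfmem r hr.1.le),
      add_neg_cancel] at hd
  have h := eq_of_hasDerivAt_zero hst hcont hderiv
  rwa [hf₀, hg₀] at h

end NBCS

/-- If `{A(t)}` generates the evolution family `U` and the adjoints
`{A(t)*}` generate the backward evolution family `U_*`, then `U(t,s) = (U_*(t,s))*` for all
`(t,s) ∈ Δ`. -/
theorem evolution_family_adjoint_of_backward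
    {X : Type*} [NormedAddCommGroup X] [InnerProductSpace ℂ X] [CompleteSpace X]
    (A : ℝ → X →ₗ[ℂ] X) (domA : ℝ → Submodule ℂ X)
    (Uev : ℝ → ℝ → X →L[ℂ] X) (Yreg : ℝ → Submodule ℂ X)
    (hU : NBCS.Generates A domA Uev Yreg)
    (Astar : ℝ → X →ₗ[ℂ] X) (domAstar : ℝ → Submodule ℂ X)
    (hadj : ∀ t, (0:ℝ) ≤ t → NBCS.IsAdjointOp (A t) (domA t) (Astar t) (domAstar t))
    (Ub : ℝ → ℝ → X →L[ℂ] X) (Ystar : ℝ → Submodule ℂ X)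
    (hUb : NBCS.GeneratesBackward Astar domAstar Ub Ystar) :
    ∀ s t : ℝ, 0 ≤ s → s ≤ t → Uev t s = ContinuousLinearMap.adjoint (Ub t s) := by
  intro s t hs hst
  obtain ⟨-, hYdense, -, -, hUsol, -⟩ := hU
  obtain ⟨-, hYstar_dense, -, -, hUbsol, -⟩ := hUb
  refine ContinuousLinearMap.eq_adjoint_of_inner_eq_on_dense (hYdense s hs)
    (hYstar_dense t (hs.trans hst)) fun x hx y hy => ?_
  exact (hUbsol t (hs.trans hst) y hy).inner_eq_of_isClassicalSolution hs hst
    (fun r hr => (hadj r (hs.trans hr.1.le)).1) (hUsol s hs x hx)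
end
end

section
/- Let Σ(𝔄,𝔅,𝔆) be a BCO system on Hilbert spaces (X,U,Y) and let P = P* ∈ L(X), R = R* ∈ L(U), J = J* ∈ L(Y). Then Σ(𝔄,𝔅,𝔆) is (P,R,J)-scattering passive if and only if for each (x₀,u₀) in the admissible space 𝒱 one has 2 Re(𝔄x₀ | Px₀)_X ≤ (Ru₀ | 𝔅x₀)_U − (𝔆x₀ | J𝔆x₀)_Y, or equivalently 2 Re(𝔄x₀ | Px₀)_X ≤ (Ru₀ | u₀)_U − (𝔆x₀ | J𝔆x₀)_Y. Moreover, Σ(𝔄,𝔅,𝔆) is (P,R,J)-scattering energy preserving if and only if equality holds in these inequalities for all (x₀,u₀) ∈ 𝒱. -/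
open Set Filter MeasureTheory
open scoped ComplexInnerProductSpace

noncomputable section

/-! Along a classical solution, `ẋ = 𝔄x` and `P = P*` give `d/dt (Px|x) = 2 Re(𝔄x|Px)`, so the
pointwise inequality on `𝒱`, applied to `(x(t), u(t))`, is the energy inequality at time `t`.
Conversely, every `(x₀,u₀) ∈ 𝒱` is the initial state of the classical solution
`x(t) = x₀ + ∫₀ᵗ T(s) 𝔄x₀ ds` with constant input `u₀`, where `T` is the semigroup generated by
the main operator `A`: the integral lies in `D(A) ⊆ ker 𝔅` and `A` maps it to `T(t)𝔄x₀ - 𝔄x₀`,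
so `𝔄x(t) = T(t)𝔄x₀ = ẋ(t)`. The energy inequality at `t = 0` is then the pointwise one. -/

namespace NBCS

section Semigroup

variable {X : Type*} [NormedAddCommGroup X] [NormedSpace ℂ X] {T : ℝ → X →L[ℂ] X}

-- `T` is only continuous on `[0,∞)`; clamping the time makes the orbit continuous on `ℝ`,
-- so that the fundamental theorem of calculus for interval integrals applies.
theorem IsC0Semigroup.continuous_orbit_max (hT : IsC0Semigroup T) (v : X) :
    Continuous fun s : ℝ => T (max s 0) v :=
  (hT.2.2 v).comp_continuous (continuous_id.max continuous_const) fun s => le_max_right s 0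

variable [CompleteSpace X]

theorem IsC0Semigroup.apply_integral_orbit (hT : IsC0Semigroup T) (v : X) {h t : ℝ}
    (hh : 0 ≤ h) (ht : 0 ≤ t) :
    T h (∫ s in (0:ℝ)..t, T (max s 0) v) = ∫ s in h..t + h, T (max s 0) v := by
  calc T h (∫ s in (0:ℝ)..t, T (max s 0) v)
      = ∫ s in (0:ℝ)..t, T h (T (max s 0) v) :=
        ((T h).intervalIntegral_comp_comm
          ((hT.continuous_orbit_max v).intervalIntegrable _ _)).symm
    _ = ∫ s in (0:ℝ)..t, T (max (s + h) 0) v := by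
        refine intervalIntegral.integral_congr fun s hs => ?_
        rw [uIcc_of_le ht] at hs
        rw [max_eq_left hs.1, max_eq_left (add_nonneg hs.1 hh), add_comm s h,
          hT.2.1 h s hh hs.1, ContinuousLinearMap.comp_apply]
    _ = ∫ s in h..t + h, T (max s 0) v :=
        (intervalIntegral.integral_comp_add_right (fun s => T (max s 0) v) h).trans
          (by rw [zero_add])

theorem IsC0Semigroup.tendsto_integral_orbit (hT : IsC0Semigroup T) (v : X) {t : ℝ}
    (ht : 0 ≤ t) :
    Tendsto (fun h : ℝ => h⁻¹ • (T h (∫ s in (0:ℝ)..t, T (max s 0) v) -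
      ∫ s in (0:ℝ)..t, T (max s 0) v)) (nhdsWithin 0 (Ioi 0)) (nhds (T t v - v)) := by
  set G : ℝ → X := fun a => ∫ s in (0:ℝ)..a, T (max s 0) v
  have hg := hT.continuous_orbit_max v
  have hint : ∀ a b : ℝ, IntervalIntegrable (fun s => T (max s 0) v) volume a b :=
    fun a b => hg.intervalIntegrable a b
  have hshift : ∀ h : ℝ, 0 < h → T h (G t) - G t = (G (t + h) - G t) - (G (0 + h) - G 0) := by
    intro h hh
    simp only [G, hT.apply_integral_orbit v hh.le ht, zero_add, intervalIntegral.integral_same,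
      sub_zero, ← intervalIntegral.integral_interval_sub_left (hint 0 (t + h)) (hint 0 h)]
    abel
  have hslope : ∀ a, Tendsto (fun h : ℝ => h⁻¹ • (G (a + h) - G a)) (nhdsWithin 0 (Ioi 0))
      (nhds (T (max a 0) v)) :=
    fun a => (hg.integral_hasStrictDerivAt 0 a).hasDerivAt.tendsto_slope_zero_right
  have hlim := (hslope t).sub (hslope 0)
  rw [max_eq_left ht, max_self, hT.1, one_apply_eq_self] at hlim
  refine hlim.congr' ?_
  filter_upwards [self_mem_nhdsWithin] with h hh
  show _ = h⁻¹ • (T h (G t) - G t)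
  rw [hshift h hh, smul_sub h⁻¹ (G (t + h) - G t)]

end Semigroup

section Generator

variable {X : Type*} [NormedAddCommGroup X] [NormedSpace ℂ X] [CompleteSpace X]
  {A : X →ₗ[ℂ] X} {domA : Submodule ℂ X} {T : ℝ → X →L[ℂ] X}

theorem IsGenerator.integral_orbit_mem (hT : IsGenerator A domA T) (v : X) {t : ℝ}
    (ht : 0 ≤ t) : (∫ s in (0:ℝ)..t, T (max s 0) v) ∈ domA :=
  (hT.2.1 _).2 ⟨_, hT.1.tendsto_integral_orbit v ht⟩

theorem IsGenerator.apply_integral_orbit (hT : IsGenerator A domA T) (v : X) {t : ℝ}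
    (ht : 0 ≤ t) : A (∫ s in (0:ℝ)..t, T (max s 0) v) = T t v - v :=
  tendsto_nhds_unique (hT.2.2 _ (hT.integral_orbit_mem v ht)) (hT.1.tendsto_integral_orbit v ht)

end Generator

section BCO

variable {X U Y : Type*} [NormedAddCommGroup X] [NormedSpace ℂ X]
  [NormedAddCommGroup U] [NormedSpace ℂ U] [NormedAddCommGroup Y] [NormedSpace ℂ Y]
  {Af : X →ₗ[ℂ] X} {domA : Submodule ℂ X} {Bf : X →ₗ[ℂ] U} {Cf : X →ₗ[ℂ] Y}

theorem continuousOn_apply_of_graph_norm_bound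
    (hC : ∃ c : ℝ, ∀ x ∈ domA, ‖Cf x‖ ≤ c * (‖x‖ + ‖Af x‖)) {x : ℝ → X} {s : Set ℝ}
    (hmem : ∀ t ∈ s, x t ∈ domA) (hx : ContinuousOn x s)
    (hAx : ContinuousOn (fun t => Af (x t)) s) :
    ContinuousOn (fun t => Cf (x t)) s := by
  obtain ⟨c, hc⟩ := hC
  intro t ht
  rw [ContinuousWithinAt, tendsto_iff_norm_sub_tendsto_zero]
  have hlim : Tendsto (fun τ => c * (‖x τ - x t‖ + ‖Af (x τ) - Af (x t)‖))
      (nhdsWithin t s) (nhds 0) := by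
    simpa using (((hx t ht).sub_const (x t)).norm.add
      ((hAx t ht).sub_const (Af (x t))).norm).const_mul c
  refine squeeze_zero' (Eventually.of_forall fun _ => norm_nonneg _) ?_ hlim
  filter_upwards [self_mem_nhdsWithin] with τ hτ
  simpa only [map_sub] using hc _ (sub_mem (hmem τ hτ) (hmem t ht))

variable [CompleteSpace X]

theorem IsGenerator.isClassicalSolAut_const {T : ℝ → X →L[ℂ] X}
    (hT : IsGenerator Af (domA ⊓ LinearMap.ker Bf) T) {x₀ : X} (hx₀ : x₀ ∈ domA) :
    IsClassicalSolAut Af domA Bf (fun _ => Bf x₀) x₀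
      (fun t => x₀ + ∫ s in (0:ℝ)..t, T (max s 0) (Af x₀)) := by
  have hg := hT.1.continuous_orbit_max (Af x₀)
  have hmem := fun t (ht : (0:ℝ) ≤ t) => Submodule.mem_inf.1 (hT.integral_orbit_mem (Af x₀) ht)
  have hAf : ∀ t ∈ Ici (0:ℝ),
      Af (x₀ + ∫ s in (0:ℝ)..t, T (max s 0) (Af x₀)) = T (max t 0) (Af x₀) := by
    intro t ht
    rw [map_add, hT.apply_integral_orbit _ ht, max_eq_left ht, add_sub_cancel]
  refine ⟨by simp, fun t ht => add_mem hx₀ (hmem t ht).1, fun t ht => ?_,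
    hg.continuousOn.congr hAf, fun t ht => ?_⟩
  · rw [hAf t ht]
    exact ((hg.integral_hasStrictDerivAt 0 t).hasDerivAt.const_add x₀).hasDerivWithinAt
  · rw [map_add, LinearMap.mem_ker.1 (hmem t ht).2, add_zero]

theorem IsBCO.exists_isClassicalSolPairAut_const (hBCO : IsBCO Af domA Bf Cf) {x₀ : X}
    (hx₀ : x₀ ∈ domA) :
    ∃ x : ℝ → X,
      IsClassicalSolPairAut Af domA Bf Cf (fun _ => Bf x₀) x₀ x (fun t => Cf (x t)) := by
  obtain ⟨⟨T, hT⟩, -, hC⟩ := hBCO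
  have hx := hT.isClassicalSolAut_const hx₀
  exact ⟨_, hx, continuousOn_apply_of_graph_norm_bound hC hx.2.1
    (fun t ht => (hx.2.2.1 t ht).continuousWithinAt) hx.2.2.2.1, fun _ _ => rfl⟩

end BCO

section Energy

variable {X U Y : Type*} [NormedAddCommGroup X] [InnerProductSpace ℂ X] [CompleteSpace X]

theorem _root_.IsSelfAdjoint.hasDerivWithinAt_re_inner_apply_self {P : X →L[ℂ] X}
    (hP : IsSelfAdjoint P) {x : ℝ → X} {x' : X} {s : Set ℝ} {t : ℝ}
    (hx : HasDerivWithinAt x x' s t) :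
    HasDerivWithinAt (fun τ => (⟪P (x τ), x τ⟫).re) (2 * (⟪x', P (x t)⟫).re) s t := by
  have hPx : HasDerivWithinAt (fun τ => P (x τ)) (P x') s t := by
    simpa [Function.comp_def] using (P.restrictScalars ℝ).hasFDerivAt.comp_hasDerivWithinAt t hx
  have hre := Complex.reCLM.hasFDerivAt.comp_hasDerivWithinAt t (hPx.inner ℂ hx)
  have hval : Complex.reCLM (⟪P (x t), x'⟫ + ⟪P x', x t⟫) = 2 * (⟪x', P (x t)⟫).re := by
    have hsymm : ⟪P x', x t⟫ = ⟪x', P (x t)⟫ := hP.isSymmetric x' (x t)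
    rw [Complex.reCLM_apply, Complex.add_re, hsymm, ← inner_conj_symm x' (P (x t)),
      Complex.conj_re]
    ring
  rwa [hval] at hre

variable [NormedAddCommGroup U] [InnerProductSpace ℂ U]
  [NormedAddCommGroup Y] [InnerProductSpace ℂ Y]
  {Af : X →ₗ[ℂ] X} {domA : Submodule ℂ X} {Bf : X →ₗ[ℂ] U} {Cf : X →ₗ[ℂ] Y}

theorem IsBCO.energy_rate_rel_iff_admissible (hBCO : IsBCO Af domA Bf Cf) {P : X →L[ℂ] X}
    (hP : IsSelfAdjoint P) (r : ℝ → ℝ → Prop) (supply : U → Y → ℝ) :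
    (∀ (u : ℝ → U) (x₀ : X) (x : ℝ → X) (y : ℝ → Y),
      IsClassicalSolPairAut Af domA Bf Cf u x₀ x y →
      ∀ t, (0:ℝ) ≤ t → ∀ d : ℝ,
        HasDerivWithinAt (fun τ => (⟪P (x τ), x τ⟫).re) d (Ici (0:ℝ)) t →
        r d (supply (u t) (y t))) ↔
    ∀ (x₀ : X) (u₀ : U), x₀ ∈ domA → Bf x₀ = u₀ →
      r (2 * (⟪Af x₀, P x₀⟫).re) (supply u₀ (Cf x₀)) := by
  constructor
  · rintro h x₀ u₀ hx₀ rfl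
    obtain ⟨x, hsol⟩ := hBCO.exists_isClassicalSolPairAut_const hx₀
    have hd := hP.hasDerivWithinAt_re_inner_apply_self (hsol.1.2.2.1 0 le_rfl)
    simpa only [hsol.1.1] using h _ _ _ _ hsol 0 le_rfl _ hd
  · rintro h u x₀ x y ⟨⟨-, hmem, hderiv, -, hBx⟩, -, hy⟩ t ht d hd
    rw [(uniqueDiffOn_Ici 0 t ht).eq_deriv _ hd
      (hP.hasDerivWithinAt_re_inner_apply_self (hderiv t ht)), hy t ht]
    exact h _ _ (hmem t ht) (hBx t ht)

end Energy

end NBCS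

theorem bco_scattering_passive_characterization_general
    {X U Y : Type*}
    [NormedAddCommGroup X] [InnerProductSpace ℂ X] [CompleteSpace X]
    [NormedAddCommGroup U] [InnerProductSpace ℂ U]
    [NormedAddCommGroup Y] [InnerProductSpace ℂ Y]
    (Af : X →ₗ[ℂ] X) (domA : Submodule ℂ X) (Bf : X →ₗ[ℂ] U) (Cf : X →ₗ[ℂ] Y)
    (hBCO : NBCS.IsBCO Af domA Bf Cf)
    (P : X →L[ℂ] X) (R : U →L[ℂ] U) (J : Y →L[ℂ] Y)
    (hP : IsSelfAdjoint P) :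
    (NBCS.ScatteringPassive Af domA Bf Cf P R J ↔
      ∀ (x₀ : X) (u₀ : U), x₀ ∈ domA → Bf x₀ = u₀ →
        2 * (⟪Af x₀, P x₀⟫).re ≤ (⟪R u₀, Bf x₀⟫).re - (⟪Cf x₀, J (Cf x₀)⟫).re) ∧
    (NBCS.ScatteringPassive Af domA Bf Cf P R J ↔
      ∀ (x₀ : X) (u₀ : U), x₀ ∈ domA → Bf x₀ = u₀ →
        2 * (⟪Af x₀, P x₀⟫).re ≤ (⟪R u₀, u₀⟫).re - (⟪Cf x₀, J (Cf x₀)⟫).re) ∧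
    (NBCS.ScatteringEnergyPreserving Af domA Bf Cf P R J ↔
      ∀ (x₀ : X) (u₀ : U), x₀ ∈ domA → Bf x₀ = u₀ →
        2 * (⟪Af x₀, P x₀⟫).re = (⟪R u₀, Bf x₀⟫).re - (⟪Cf x₀, J (Cf x₀)⟫).re) ∧
    (NBCS.ScatteringEnergyPreserving Af domA Bf Cf P R J ↔
      ∀ (x₀ : X) (u₀ : U), x₀ ∈ domA → Bf x₀ = u₀ →
        2 * (⟪Af x₀, P x₀⟫).re = (⟪R u₀, u₀⟫).re - (⟪Cf x₀, J (Cf x₀)⟫).re) := by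
  have energy_iff := fun r : ℝ → ℝ → Prop =>
    hBCO.energy_rate_rel_iff_admissible hP r fun u y => (⟪R u, u⟫).re - (⟪y, J y⟫).re
  have input_iff : ∀ r : ℝ → ℝ → Prop,
      (∀ (x₀ : X) (u₀ : U), x₀ ∈ domA → Bf x₀ = u₀ →
        r (2 * (⟪Af x₀, P x₀⟫).re) ((⟪R u₀, Bf x₀⟫).re - (⟪Cf x₀, J (Cf x₀)⟫).re)) ↔
      ∀ (x₀ : X) (u₀ : U), x₀ ∈ domA → Bf x₀ = u₀ →
        r (2 * (⟪Af x₀, P x₀⟫).re) ((⟪R u₀, u₀⟫).re - (⟪Cf x₀, J (Cf x₀)⟫).re) :=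
    fun r => forall₄_congr fun _ _ _ hu => by rw [hu]
  exact ⟨(energy_iff _).trans (input_iff _).symm, energy_iff _,
    (energy_iff _).trans (input_iff _).symm, energy_iff _⟩

/-- Characterization of `(P,R,J)`-scattering passivity (and energy
preservation) of a BCO system `Σ(𝔄,𝔅,𝔆)` by the pointwise inequalities on the admissible
space `𝒱 = {(x₀,u₀) : x₀ ∈ D(𝔄), 𝔅x₀ = u₀}`. -/
theorem bco_scattering_passive_characterization
    {X U Y : Type*}
    [NormedAddCommGroup X] [InnerProductSpace ℂ X] [CompleteSpace X]
    [NormedAddCommGroup U] [InnerProductSpace ℂ U] [CompleteSpace U]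
    [NormedAddCommGroup Y] [InnerProductSpace ℂ Y] [CompleteSpace Y]
    (Af : X →ₗ[ℂ] X) (domA : Submodule ℂ X) (Bf : X →ₗ[ℂ] U) (Cf : X →ₗ[ℂ] Y)
    (hBCO : NBCS.IsBCO Af domA Bf Cf)
    (P : X →L[ℂ] X) (R : U →L[ℂ] U) (J : Y →L[ℂ] Y)
    (hP : IsSelfAdjoint P) (hR : IsSelfAdjoint R) (hJ : IsSelfAdjoint J) :
    (NBCS.ScatteringPassive Af domA Bf Cf P R J ↔
      ∀ (x₀ : X) (u₀ : U), x₀ ∈ domA → Bf x₀ = u₀ →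
        2 * (⟪Af x₀, P x₀⟫).re ≤ (⟪R u₀, Bf x₀⟫).re - (⟪Cf x₀, J (Cf x₀)⟫).re) ∧
    (NBCS.ScatteringPassive Af domA Bf Cf P R J ↔
      ∀ (x₀ : X) (u₀ : U), x₀ ∈ domA → Bf x₀ = u₀ →
        2 * (⟪Af x₀, P x₀⟫).re ≤ (⟪R u₀, u₀⟫).re - (⟪Cf x₀, J (Cf x₀)⟫).re) ∧
    (NBCS.ScatteringEnergyPreserving Af domA Bf Cf P R J ↔
      ∀ (x₀ : X) (u₀ : U), x₀ ∈ domA → Bf x₀ = u₀ →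
        2 * (⟪Af x₀, P x₀⟫).re = (⟪R u₀, Bf x₀⟫).re - (⟪Cf x₀, J (Cf x₀)⟫).re) ∧
    (NBCS.ScatteringEnergyPreserving Af domA Bf Cf P R J ↔
      ∀ (x₀ : X) (u₀ : U), x₀ ∈ domA → Bf x₀ = u₀ →
        2 * (⟪Af x₀, P x₀⟫).re = (⟪R u₀, u₀⟫).re - (⟪Cf x₀, J (Cf x₀)⟫).re) :=
  bco_scattering_passive_characterization_general Af domA Bf Cf hBCO P R J hP
end
end
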